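/- Let x ∈ {0,1}^n with |x|_0 = i, let p ∈ [0,1], and let X_1, …, X_m be i.i.d. copies of the one-bit-noise fitness of x on OneMax, where m = 2n^3 + 1. If p·i/n ≤ 1/2 − c/n for a constant c > 0, then the median of X_1, …, X_m is at most n − i with probability at least 1 − 2·exp(−2c²n⁴/m). -/

import Mathlib

/-!
Proof idea: if the median of `X₁, …, X_{2k+1}` (here `k = n³`) exceeds `n - i`, then at least
`k + 1` of the samples are `n - i + 1`, an outcome of probability `r = p·i/n ≤ 1/2 - c/n` each.
A union bound over the sets of indices of such samples bounds this by
`2^(2k+1) r^(k+1) (1-r)^k = 2r (4r(1-r))^k ≤ (1 - 4c²/n²)^k ≤ exp(-4c²n)`,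
which is already smaller than `2·exp(-2c²n⁴/(2n³+1))`.
-/

open MeasureTheory ENNReal

/-- The median of `m` real values: the `((m+1)/2)`-th smallest value for odd `m`, and the
average of the `(m/2)`-th and `(m/2+1)`-th smallest values for even `m`. -/
noncomputable def medianOf {m : ℕ} (v : Fin m → ℝ) : ℝ :=
  let s := List.insertionSort (· ≤ ·) (List.ofFn v)
  if m % 2 = 1 then s.getD ((m - 1) / 2) 0
  else (s.getD (m / 2 - 1) 0 + s.getD (m / 2) 0) / 2

/-- One-bit noise on OneMax with parameter `p`, for a solution `x ∈ {0,1}ⁿ` with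
`|x|₀ = i` zero-bits: the noisy fitness equals `n - i - 1` with probability `p(n-i)/n`,
`n - i` with probability `1 - p`, and `n - i + 1` with probability `p·i/n`. -/
noncomputable def oneBitNoiseDist (n : ℕ) (p : ℝ) (i : ℕ) : Measure ℝ :=
  ENNReal.ofReal (p * ((n : ℝ) - i) / n) • Measure.dirac ((n : ℝ) - i - 1)
    + ENNReal.ofReal (1 - p) • Measure.dirac ((n : ℝ) - i)
    + ENNReal.ofReal (p * i / n) • Measure.dirac ((n : ℝ) - i + 1)

open Finset

lemma List.countP_ofFn {α : Type*} {m : ℕ} (v : Fin m → α) (p : α → Prop)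
    [DecidablePred p] :
    (List.ofFn v).countP (fun x => decide (p x)) = #{j | p (v j)} := by
  rw [← Multiset.coe_countP, ← Fin.univ_val_map, Multiset.countP_map]
  rfl

lemma card_lt_of_lt_medianOf {k : ℕ} {v : Fin (2 * k + 1) → ℝ} {a : ℝ}
    (h : a < medianOf v) :
    k < #{j | a < v j} := by
  set s := (List.ofFn v).insertionSort (· ≤ ·)
  have hlen : s.length = 2 * k + 1 := by rw [List.length_insertionSort, List.length_ofFn]
  have hk : k < s.length := by omega
  have hmed : medianOf v = s[k] := by
    rw [medianOf, if_pos (by omega), show (2 * k + 1 - 1) / 2 = k by omega]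
    exact List.getD_eq_getElem _ _ hk
  have hsorted : (s.drop k).Pairwise (· ≤ ·) := (List.pairwise_insertionSort _ _).drop
  rw [List.drop_eq_getElem_cons hk, List.pairwise_cons] at hsorted
  have hdrop : ∀ x ∈ s.drop k, a < x := by
    rw [List.drop_eq_getElem_cons hk]
    intro x hx
    rcases List.mem_cons.1 hx with rfl | hx
    · rwa [← hmed]
    · exact (hmed ▸ h).trans_le (hsorted.1 x hx)
  calc k < (s.drop k).length := by rw [List.length_drop]; omega
    _ = (s.drop k).countP (a < ·) := (List.countP_eq_length.2 (by simpa using hdrop)).symm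
    _ ≤ s.countP (a < ·) := (List.drop_sublist k s).countP_le
    _ = (List.ofFn v).countP (a < ·) := (List.perm_insertionSort _ _).countP_eq _
    _ = #{j | a < v j} := List.countP_ofFn v _

lemma pow_mul_pow_le_pow_mul_pow {M : Type*} [CommMonoid M] [PartialOrder M]
    [IsOrderedMonoid M]
    {x y : M} (hxy : x ≤ y) {a b i j : ℕ} (hia : i ≤ a) (hsum : a + b = i + j) :
    x ^ a * y ^ b ≤ x ^ i * y ^ j := by
  obtain ⟨d, rfl⟩ := Nat.exists_eq_add_of_le hia
  obtain rfl : j = d + b := by omega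
  rw [pow_add, pow_add, mul_assoc]
  gcongr

lemma measure_pi_lt_card_mem_le {ι α : Type*} [Fintype ι] [MeasurableSpace α]
    (μ : Measure α) [SigmaFinite μ] (S : Set α) [DecidablePred (· ∈ S)] {k : ℕ}
    (hι : Fintype.card ι = 2 * k + 1) (hS : μ S ≤ μ Sᶜ) :
    Measure.pi (fun _ : ι => μ) {v | k < #{j | v j ∈ S}} ≤
      2 ^ (2 * k + 1) * (μ S ^ (k + 1) * μ Sᶜ ^ k) := by
  classical
  let box (T : Finset ι) : Set (ι → α) := Set.univ.pi fun j => if j ∈ T then S else Sᶜ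
  let majorities : Finset (Finset ι) := {T | k < #T}
  have hcover : {v | k < #{j | v j ∈ S}} ⊆ ⋃ T ∈ majorities, box T := by
    intro v hv
    refine Set.mem_iUnion₂.2
      ⟨({j | v j ∈ S} : Finset ι), by simpa [majorities] using hv, ?_⟩
    intro j _
    by_cases hj : v j ∈ S <;> simp [hj]
  have hbox : ∀ T ∈ majorities,
      Measure.pi (fun _ => μ) (box T) ≤ μ S ^ (k + 1) * μ Sᶜ ^ k := by
    intro T hT
    have hprod : Measure.pi (fun _ => μ) (box T) = μ S ^ #T * μ Sᶜ ^ #Tᶜ := by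
      simp [box, Measure.pi_pi, apply_ite μ, Finset.prod_ite, Finset.filter_not,
        compl_eq_univ_sdiff]
    rw [hprod]
    exact pow_mul_pow_le_pow_mul_pow hS (mem_filter.1 hT).2
      (by rw [card_add_card_compl, hι]; ring)
  have hcard : (#majorities : ℝ≥0∞) ≤ 2 ^ (2 * k + 1) := by
    have : #majorities ≤ 2 ^ (2 * k + 1) := by
      rw [← hι, ← Fintype.card_finset]
      exact card_le_univ _
    exact_mod_cast this
  calc _ ≤ Measure.pi (fun _ => μ) (⋃ T ∈ majorities, box T) := measure_mono hcover
    _ ≤ ∑ T ∈ majorities, Measure.pi (fun _ => μ) (box T) := measure_biUnion_finset_le _ _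
    _ ≤ ∑ T ∈ majorities, μ S ^ (k + 1) * μ Sᶜ ^ k := sum_le_sum hbox
    _ = #majorities * (μ S ^ (k + 1) * μ Sᶜ ^ k) := by rw [sum_const, nsmul_eq_mul]
    _ ≤ 2 ^ (2 * k + 1) * (μ S ^ (k + 1) * μ Sᶜ ^ k) := by gcongr

lemma one_sub_le_measure_of_measure_compl_le {α : Type*} [MeasurableSpace α] {μ : Measure α}
    [IsProbabilityMeasure μ] {s : Set α} {δ : ℝ≥0∞} (h : μ sᶜ ≤ δ) :
    1 - δ ≤ μ s := by
  rw [tsub_le_iff_right, ← measure_univ (μ := μ)]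
  exact (measure_univ_le_add_compl s).trans (by gcongr)

lemma two_pow_mul_pow_mul_one_sub_pow_le_exp {r δ : ℝ} (hr : 0 ≤ r) (hδ : 0 ≤ δ)
    (hrδ : r ≤ 1 / 2 - δ) (k : ℕ) :
    2 ^ (2 * k + 1) * (r ^ (k + 1) * (1 - r) ^ k) ≤ Real.exp (-4 * δ ^ 2 * k) := by
  have hq : 4 * r * (1 - r) ≤ Real.exp (-4 * δ ^ 2) := calc
    4 * r * (1 - r) = 1 - (1 - 2 * r) ^ 2 := by ring
    _ ≤ -4 * δ ^ 2 + 1 := by nlinarith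
    _ ≤ Real.exp (-4 * δ ^ 2) := Real.add_one_le_exp _
  calc 2 ^ (2 * k + 1) * (r ^ (k + 1) * (1 - r) ^ k) = 2 * r * (4 * r * (1 - r)) ^ k := by
        rw [pow_succ, pow_mul, mul_pow, mul_pow]; ring
    _ ≤ 1 * Real.exp (-4 * δ ^ 2) ^ k := by
        have : 0 ≤ 1 - r := by linarith
        gcongr
        linarith
    _ = Real.exp (-4 * δ ^ 2 * k) := by rw [one_mul, ← Real.exp_nat_mul, mul_comm]

lemma exp_neg_four_mul_div_sq_mul_cube_le {n : ℕ} (hn : 0 < n) (c : ℝ) :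
    Real.exp (-4 * (c / n) ^ 2 * ((n ^ 3 : ℕ) : ℝ)) ≤
      2 * Real.exp (-2 * c ^ 2 * (n : ℝ) ^ 4 / (2 * (n : ℝ) ^ 3 + 1)) := by
  have hn' : (0 : ℝ) < n := by exact_mod_cast hn
  have hexponent : -4 * (c / n) ^ 2 * ((n ^ 3 : ℕ) : ℝ) ≤
      -2 * c ^ 2 * (n : ℝ) ^ 4 / (2 * (n : ℝ) ^ 3 + 1) := by
    rw [le_div_iff₀ (by positivity)]
    push_cast
    field_simp
    nlinarith [sq_nonneg c, pow_pos hn' 3]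
  linarith [Real.exp_le_exp.2 hexponent,
    Real.exp_pos (-2 * c ^ 2 * (n : ℝ) ^ 4 / (2 * (n : ℝ) ^ 3 + 1))]

section OneBitNoise

variable {n i : ℕ} {p : ℝ}

lemma oneBitNoiseDist_Ioi :
    oneBitNoiseDist n p i (Set.Ioi ((n : ℝ) - i)) = ENNReal.ofReal (p * i / n) := by
  simp [oneBitNoiseDist]

lemma oneBitNoiseDist_Iic (hn : 0 < n) (hi : i ≤ n) (hp0 : 0 ≤ p) (hp1 : p ≤ 1) :
    oneBitNoiseDist n p i (Set.Iic ((n : ℝ) - i)) = ENNReal.ofReal (1 - p * i / n) := by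
  have : (i : ℝ) ≤ n := by exact_mod_cast hi
  have hsplit : 1 - p * i / n = p * ((n : ℝ) - i) / n + (1 - p) := by field_simp; ring
  rw [hsplit, ofReal_add (by positivity) (by linarith)]
  simp [oneBitNoiseDist]

lemma isProbabilityMeasure_oneBitNoiseDist (hn : 0 < n) (hi : i ≤ n) (hp0 : 0 ≤ p)
    (hp1 : p ≤ 1) : IsProbabilityMeasure (oneBitNoiseDist n p i) := by
  have hr0 : 0 ≤ p * i / n := by positivity
  have hr1 : p * i / n ≤ 1 := by
    rw [div_le_one (by positivity)]
    nlinarith [(Nat.cast_le (α := ℝ)).2 hi]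
  constructor
  rw [← Set.Iic_union_Ioi (a := (n : ℝ) - i),
    measure_union (Set.Iic_disjoint_Ioi le_rfl) measurableSet_Ioi,
    oneBitNoiseDist_Iic hn hi hp0 hp1, oneBitNoiseDist_Ioi, ← ofReal_add (by linarith) hr0,
    sub_add_cancel, ofReal_one]

end OneBitNoise

/-- Let `X₁, …, X_m` be i.i.d. copies of the one-bit-noise fitness of a solution with `i`
zero-bits, where `m = 2n³ + 1`. If `p·i/n ≤ 1/2 - c/n` for a constant `c > 0`, then the
median of `X₁, …, X_m` is at most `n - i` with probability at least
`1 - 2·exp(-2c²n⁴/m)`. -/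
theorem median_onebit_noise_le (n i : ℕ) (hn : 0 < n) (hi : i ≤ n)
    (p : ℝ) (hp0 : 0 ≤ p) (hp1 : p ≤ 1) (c : ℝ) (hc : 0 < c)
    (h : p * i / n ≤ 1 / 2 - c / n) :
    ENNReal.ofReal (1 - 2 * Real.exp (-2 * c ^ 2 * (n : ℝ) ^ 4 / (2 * (n : ℝ) ^ 3 + 1))) ≤
      (Measure.pi fun _ : Fin (2 * n ^ 3 + 1) => oneBitNoiseDist n p i)
        {v | medianOf v ≤ (n : ℝ) - i} := by
  have := isProbabilityMeasure_oneBitNoiseDist hn hi hp0 hp1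
  set μ := oneBitNoiseDist n p i
  set a : ℝ := n - i
  set r : ℝ := p * i / n
  set ε := 2 * Real.exp (-2 * c ^ 2 * (n : ℝ) ^ 4 / (2 * (n : ℝ) ^ 3 + 1))
  have hr : 0 ≤ r := by positivity
  have hδ : 0 ≤ c / n := by positivity
  have hμ : μ (Set.Ioi a) = ENNReal.ofReal r ∧ μ (Set.Ioi a)ᶜ = ENNReal.ofReal (1 - r) := by
    rw [Set.compl_Ioi]
    exact ⟨oneBitNoiseDist_Ioi, oneBitNoiseDist_Iic hn hi hp0 hp1⟩
  let bad : Set (Fin (2 * n ^ 3 + 1) → ℝ) := {v | n ^ 3 < #{j | v j ∈ Set.Ioi a}}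
  have hmedian : {v | medianOf v ≤ a}ᶜ ⊆ bad :=
    fun v hv => by simpa [bad] using card_lt_of_lt_medianOf (not_le.1 hv)
  have hbad : Measure.pi (fun _ => μ) bad ≤ ENNReal.ofReal ε := calc
    _ ≤ 2 ^ (2 * n ^ 3 + 1) * (μ (Set.Ioi a) ^ (n ^ 3 + 1) * μ (Set.Ioi a)ᶜ ^ n ^ 3) :=
      measure_pi_lt_card_mem_le μ _ (Fintype.card_fin _)
        (by rw [hμ.1, hμ.2]; exact ofReal_le_ofReal (by linarith))
    _ = ENNReal.ofReal (2 ^ (2 * n ^ 3 + 1) * (r ^ (n ^ 3 + 1) * (1 - r) ^ n ^ 3)) := by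
      rw [hμ.1, hμ.2, ofReal_mul (by positivity), ofReal_mul (by positivity),
        ofReal_pow zero_le_two, ofReal_ofNat, ofReal_pow hr, ofReal_pow (by linarith)]
    _ ≤ ENNReal.ofReal (Real.exp (-4 * (c / n) ^ 2 * ((n ^ 3 : ℕ) : ℝ))) :=
      ofReal_le_ofReal (two_pow_mul_pow_mul_one_sub_pow_le_exp hr hδ h _)
    _ ≤ ENNReal.ofReal ε := ofReal_le_ofReal (exp_neg_four_mul_div_sq_mul_cube_le hn c)
  rw [ofReal_sub _ (by positivity), ofReal_one]
  exact one_sub_le_measure_of_measure_compl_le ((measure_mono hmedian).trans hbad)
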